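/- arXiv:2308.04259 — 3 statements merged into one kernel-verified Lean document; each statement's English description precedes it below -/
import Mathlib

section
/- For each k ≥ 0 the GF-RLS cost J_k(θ̂) = Σ_{i=0}^k ‖y_i − φ_i θ̂‖²_{Γ_i⁻¹} − Σ_{i=0}^k ‖θ̂ − θ_i‖²_{F_i} + ‖θ̂ − θ_0‖²_{P_0⁻¹} has a unique global minimizer θ_{k+1}, which satisfies the recursions P_{k+1}⁻¹ = P_k⁻¹ − F_k + φ_kᵀΓ_k⁻¹φ_k and θ_{k+1} = θ_k + P_{k+1}φ_kᵀΓ_k⁻¹(y_k − φ_kθ_k). -/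
/-!
Write `A_k = P₀⁻¹ + ∑_{i<k} (φᵢᵀ Γᵢ⁻¹ φᵢ - Fᵢ)` and `b_k = P₀⁻¹ θ₀ + ∑_{i<k} (φᵢᵀ Γᵢ⁻¹ yᵢ - Fᵢ θᵢ)`.
Expanding the squares, `J_k(x) = xᵀ A_{k+1} x - 2 xᵀ b_{k+1} + J_k(0)`. The hypothesis on `F_k`
makes every `A_k` positive definite by induction, so `J_k` has the unique minimizer solving
`A_{k+1} x = b_{k+1}`; the GF-RLS update is precisely what carries `A_k θ_k = b_k` from `k` to
`k + 1`, and `P_k = A_k⁻¹`.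
-/

open Matrix

section QuadraticForms

variable {ι κ R : Type*} [Fintype ι] [Fintype κ] [CommRing R]

lemma Matrix.IsSymm.dotProduct_mulVec_comm {M : Matrix ι ι R} (hM : M.IsSymm) (u v : ι → R) :
    u ⬝ᵥ M *ᵥ v = v ⬝ᵥ M *ᵥ u := by
  simpa only [hM.eq] using dotProduct_transpose_mulVec M u v

lemma Matrix.IsSymm.sub_dotProduct_mulVec_sub {M : Matrix ι ι R} (hM : M.IsSymm) (x a : ι → R) :
    (x - a) ⬝ᵥ M *ᵥ (x - a) = x ⬝ᵥ M *ᵥ x - 2 * (x ⬝ᵥ M *ᵥ a) + a ⬝ᵥ M *ᵥ a := by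
  rw [mulVec_sub, dotProduct_sub, sub_dotProduct, sub_dotProduct, hM.dotProduct_mulVec_comm a x]
  ring

lemma Matrix.IsSymm.residual_dotProduct_mulVec {N : Matrix κ κ R} (hN : N.IsSymm)
    (A : Matrix κ ι R) (y : κ → R) (x : ι → R) :
    (y - A *ᵥ x) ⬝ᵥ N *ᵥ (y - A *ᵥ x)
      = x ⬝ᵥ (Aᵀ * N * A) *ᵥ x - 2 * (x ⬝ᵥ (Aᵀ * N) *ᵥ y) + y ⬝ᵥ N *ᵥ y := by
  have hquad : x ⬝ᵥ (Aᵀ * N * A) *ᵥ x = (A *ᵥ x) ⬝ᵥ N *ᵥ (A *ᵥ x) := by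
    rw [← mulVec_mulVec, ← mulVec_mulVec, dotProduct_transpose_mulVec, dotProduct_comm]
  have hlin : x ⬝ᵥ (Aᵀ * N) *ᵥ y = y ⬝ᵥ N *ᵥ (A *ᵥ x) := by
    rw [← mulVec_mulVec, dotProduct_transpose_mulVec, dotProduct_comm, hN.dotProduct_mulVec_comm]
  rw [hN.sub_dotProduct_mulVec_sub, hquad, hlin]
  ring

end QuadraticForms

lemma Matrix.PosDef.isSymm {ι : Type*} {M : Matrix ι ι ℝ} (hM : M.PosDef) : M.IsSymm :=
  isHermitian_iff_isSymm.mp hM.isHermitian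

section RealQuadraticForms

variable {ι : Type*} [Fintype ι] {M : Matrix ι ι ℝ}

lemma Matrix.PosDef.dotProduct_mulVec_sub_two_mul_lt (hM : M.PosDef) {a x : ι → ℝ} (hx : x ≠ a) :
    a ⬝ᵥ M *ᵥ a - 2 * (a ⬝ᵥ M *ᵥ a) < x ⬝ᵥ M *ᵥ x - 2 * (x ⬝ᵥ M *ᵥ a) := by
  have hpos : 0 < (x - a) ⬝ᵥ M *ᵥ (x - a) := by
    simpa using hM.dotProduct_mulVec_pos (sub_ne_zero.mpr hx)
  rw [hM.isSymm.sub_dotProduct_mulVec_sub] at hpos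
  linarith

end RealQuadraticForms

noncomputable section

namespace GFRLS

open Finset

variable {ι κ : Type*} [Fintype ι] [DecidableEq ι] [Fintype κ] [DecidableEq κ]
  (Γ : ℕ → Matrix κ κ ℝ) (φ : ℕ → Matrix κ ι ℝ) (y : ℕ → κ → ℝ)
  (P0 : Matrix ι ι ℝ) (θ0 : ι → ℝ) (F : ℕ → Matrix ι ι ℝ)

/-- The information matrix `P_k⁻¹`. -/
def info (k : ℕ) : Matrix ι ι ℝ :=
  P0⁻¹ + ∑ i ∈ range k, (-(F i) + (φ i)ᵀ * (Γ i)⁻¹ * φ i)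

def estimate : ℕ → ι → ℝ
  | 0 => θ0
  | k + 1 => estimate k +
      ((info Γ φ P0 F (k + 1))⁻¹ * (φ k)ᵀ * (Γ k)⁻¹) *ᵥ (y k - φ k *ᵥ estimate k)

/-- The normal equations of `cost θ k` read `info (k + 1) *ᵥ x = rhs θ (k + 1)`. -/
def rhs (θ : ℕ → ι → ℝ) (k : ℕ) : ι → ℝ :=
  P0⁻¹ *ᵥ θ0 + ∑ i ∈ range k, (((φ i)ᵀ * (Γ i)⁻¹) *ᵥ y i - F i *ᵥ θ i)

def cost (θ : ℕ → ι → ℝ) (k : ℕ) (x : ι → ℝ) : ℝ :=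
  (∑ i ∈ range (k + 1), (y i - φ i *ᵥ x) ⬝ᵥ (Γ i)⁻¹ *ᵥ (y i - φ i *ᵥ x))
    - (∑ i ∈ range (k + 1), (x - θ i) ⬝ᵥ F i *ᵥ (x - θ i))
    + (x - θ0) ⬝ᵥ P0⁻¹ *ᵥ (x - θ0)

lemma info_zero : info Γ φ P0 F 0 = P0⁻¹ := by
  simp [info]

lemma info_succ (k : ℕ) :
    info Γ φ P0 F (k + 1) = info Γ φ P0 F k - F k + (φ k)ᵀ * (Γ k)⁻¹ * φ k := by
  simp only [info, sum_range_succ]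
  abel

lemma estimate_succ (k : ℕ) :
    estimate Γ φ y P0 θ0 F (k + 1) = estimate Γ φ y P0 θ0 F k +
      ((info Γ φ P0 F (k + 1))⁻¹ * (φ k)ᵀ * (Γ k)⁻¹) *ᵥ (y k - φ k *ᵥ estimate Γ φ y P0 θ0 F k) :=
  rfl

lemma rhs_succ (θ : ℕ → ι → ℝ) (k : ℕ) :
    rhs Γ φ y P0 θ0 F θ (k + 1)
      = rhs Γ φ y P0 θ0 F θ k + (((φ k)ᵀ * (Γ k)⁻¹) *ᵥ y k - F k *ᵥ θ k) := by
  simp only [rhs, sum_range_succ, add_assoc]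

variable {Γ φ y P0 θ0 F}

lemma info_posDef (hΓ : ∀ k, (Γ k).PosDef) (hP0 : P0.PosDef)
    (hinfo_sub : ∀ k, (info Γ φ P0 F k - F k).PosDef) (k : ℕ) : (info Γ φ P0 F k).PosDef := by
  induction k with
  | zero => simpa [info_zero] using hP0.inv
  | succ k _ =>
    rw [info_succ]
    have hgain_psd := (hΓ k).inv.posSemidef.conjTranspose_mul_mul_same (φ k)
    simpa using (hinfo_sub k).add_posSemidef hgain_psd

lemma info_mulVec_estimate (hinfo : ∀ k, IsUnit (info Γ φ P0 F (k + 1)).det) (k : ℕ) :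
    info Γ φ P0 F k *ᵥ estimate Γ φ y P0 θ0 F k
      = rhs Γ φ y P0 θ0 F (estimate Γ φ y P0 θ0 F) k := by
  induction k with
  | zero => simp [info_zero, estimate, rhs]
  | succ k ih =>
    have hgain : info Γ φ P0 F (k + 1) * ((info Γ φ P0 F (k + 1))⁻¹ * (φ k)ᵀ * (Γ k)⁻¹)
        = (φ k)ᵀ * (Γ k)⁻¹ := by
      rw [Matrix.mul_assoc, mul_nonsing_inv_cancel_left _ _ (hinfo k)]
    rw [estimate_succ, mulVec_add, mulVec_mulVec, hgain, rhs_succ, ← ih, info_succ, add_mulVec,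
      sub_mulVec, mulVec_sub, mulVec_mulVec]
    abel

lemma cost_eq_quadratic (hΓ : ∀ k, ((Γ k)⁻¹).IsSymm) (hF : ∀ k, (F k).IsSymm)
    (hP0 : (P0⁻¹).IsSymm) (θ : ℕ → ι → ℝ) (k : ℕ) (x : ι → ℝ) :
    cost Γ φ y P0 θ0 F θ k x = x ⬝ᵥ info Γ φ P0 F (k + 1) *ᵥ x
      - 2 * (x ⬝ᵥ rhs Γ φ y P0 θ0 F θ (k + 1)) + cost Γ φ y P0 θ0 F θ k 0 := by
  simp only [cost, (hΓ _).residual_dotProduct_mulVec, (hF _).sub_dotProduct_mulVec_sub,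
    hP0.sub_dotProduct_mulVec_sub]
  simp only [info, rhs, add_mulVec, sum_mulVec, neg_mulVec, dotProduct_add, dotProduct_sum,
    dotProduct_neg, dotProduct_sub, zero_dotProduct, mulVec_zero, dotProduct_zero,
    sum_add_distrib, sum_sub_distrib, sum_neg_distrib, ← mul_sum]
  ring

lemma cost_estimate_lt (hΓ : ∀ k, (Γ k).PosDef) (hP0 : P0.PosDef) (hFsymm : ∀ k, (F k).IsSymm)
    (hinfo_sub : ∀ k, (info Γ φ P0 F k - F k).PosDef) (k : ℕ) {x : ι → ℝ}
    (hx : x ≠ estimate Γ φ y P0 θ0 F (k + 1)) :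
    cost Γ φ y P0 θ0 F (estimate Γ φ y P0 θ0 F) k (estimate Γ φ y P0 θ0 F (k + 1))
      < cost Γ φ y P0 θ0 F (estimate Γ φ y P0 θ0 F) k x := by
  have hinfo := info_posDef hΓ hP0 hinfo_sub
  have hΓinv (i : ℕ) : ((Γ i)⁻¹).IsSymm := (hΓ i).inv.isSymm
  rw [cost_eq_quadratic hΓinv hFsymm hP0.inv.isSymm _ _ x,
    cost_eq_quadratic hΓinv hFsymm hP0.inv.isSymm _ _ (estimate _ _ _ _ _ _ (k + 1)),
    ← info_mulVec_estimate (fun k => (hinfo (k + 1)).det_pos.ne'.isUnit)]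
  exact add_lt_add_left ((hinfo (k + 1)).dotProduct_mulVec_sub_two_mul_lt hx) _

end GFRLS

end

/-- the GF-RLS cost has a unique global minimizer at each step, and the
sequence of minimizers satisfies the GF-RLS recursions. -/
theorem gfrls_cost_unique_minimizer (n p : ℕ)
    (Γ : ℕ → Matrix (Fin p) (Fin p) ℝ) (hΓ : ∀ k, (Γ k).PosDef)
    (φ : ℕ → Matrix (Fin p) (Fin n) ℝ) (y : ℕ → Fin p → ℝ)
    (P0 : Matrix (Fin n) (Fin n) ℝ) (hP0 : P0.PosDef) (θ0 : Fin n → ℝ)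
    (F : ℕ → Matrix (Fin n) (Fin n) ℝ) (hFsymm : ∀ k, (F k).IsSymm)
    (hFlt : ∀ k, ((P0⁻¹ + ∑ i ∈ Finset.range k, (-(F i) + (φ i)ᵀ * (Γ i)⁻¹ * φ i))
        - F k).PosDef) :
    ∃ (θ : ℕ → Fin n → ℝ) (P : ℕ → Matrix (Fin n) (Fin n) ℝ),
      θ 0 = θ0 ∧ P 0 = P0 ∧
      ∀ k : ℕ,
        (P (k + 1))⁻¹ = (P k)⁻¹ - F k + (φ k)ᵀ * (Γ k)⁻¹ * φ k ∧
        θ (k + 1) = θ k + (P (k + 1) * (φ k)ᵀ * (Γ k)⁻¹).mulVec (y k - (φ k).mulVec (θ k)) ∧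
        (∀ x : Fin n → ℝ, x ≠ θ (k + 1) →
          ((∑ i ∈ Finset.range (k + 1),
              (y i - (φ i).mulVec (θ (k + 1))) ⬝ᵥ
                ((Γ i)⁻¹).mulVec (y i - (φ i).mulVec (θ (k + 1))))
            - (∑ i ∈ Finset.range (k + 1),
              (θ (k + 1) - θ i) ⬝ᵥ (F i).mulVec (θ (k + 1) - θ i))
            + (θ (k + 1) - θ0) ⬝ᵥ (P0⁻¹).mulVec (θ (k + 1) - θ0))
          <
          ((∑ i ∈ Finset.range (k + 1),
              (y i - (φ i).mulVec x) ⬝ᵥ ((Γ i)⁻¹).mulVec (y i - (φ i).mulVec x))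
            - (∑ i ∈ Finset.range (k + 1), (x - θ i) ⬝ᵥ (F i).mulVec (x - θ i))
            + (x - θ0) ⬝ᵥ (P0⁻¹).mulVec (x - θ0))) := by
  have hinfo := GFRLS.info_posDef hΓ hP0 hFlt
  refine ⟨GFRLS.estimate Γ φ y P0 θ0 F, fun k => (GFRLS.info Γ φ P0 F k)⁻¹, rfl, ?_,
    fun k => ⟨?_, rfl, fun x hx => GFRLS.cost_estimate_lt hΓ hP0 hFsymm hFlt k hx⟩⟩
  · dsimp only
    rw [GFRLS.info_zero, nonsing_inv_nonsing_inv _ hP0.det_pos.ne'.isUnit]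
  · dsimp only
    rw [nonsing_inv_nonsing_inv _ (hinfo _).det_pos.ne'.isUnit,
      nonsing_inv_nonsing_inv _ (hinfo _).det_pos.ne'.isUnit, GFRLS.info_succ]
end

section
/- With M_k := I_n − P_{k+1}φ̄_kᵀφ̄_k and ΔV_k := −M_kᵀP_{k+1}⁻¹M_k + P_k⁻¹, where P_{k+1}⁻¹ = P_k⁻¹ − F_k + φ̄_kᵀφ̄_k and P_k⁻¹ − F_k ≻ 0, one has ΔV_k = F_k + φ̄_kᵀG_k⁻¹φ̄_k where G_k := I_p + φ̄_k(P_k⁻¹ − F_k)⁻¹φ̄_kᵀ; consequently ΔV_k ⪰ F_k + φ̄_kᵀφ̄_k / (1 + λ_max(φ̄_kφ̄_kᵀ)·λ_max((P_k⁻¹ − F_k)⁻¹)). -/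
/-!
Write `A = P⁻¹ - F` and `G = 1 + φ A⁻¹ φᵀ`. Since `Pn⁻¹ (1 - Pn φᵀφ) = Pn⁻¹ - φᵀφ = A`, the
quadratic form collapses to `ΔV = P⁻¹ - (1 - φᵀφ Pn) A = F + φᵀφ Pn A`, and the push-through
identity `G⁻¹ φ = φ (A + φᵀφ)⁻¹ A = φ Pn A` turns this into `F + φᵀ G⁻¹ φ`.

For the bound, `A⁻¹ ≤ λ_max(A⁻¹)` and `φφᵀ ≤ λ_max(φφᵀ)` in the Loewner order give
`G ≤ c := 1 + λ_max(φφᵀ) λ_max(A⁻¹)`. Inversion is antitone on positive definite matrices, so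
`c⁻¹ ≤ G⁻¹`, and conjugating by `φ` yields `c⁻¹ φᵀφ ≤ φᵀ G⁻¹ φ`.
-/

open Matrix

open scoped MatrixOrder

namespace Matrix

variable {m n : Type*} [Fintype m] [Fintype n]

lemma inv_one_add_mul_inv_mul_mul [DecidableEq n] [DecidableEq m] {α : Type*} [CommRing α]
    {A : Matrix n n α} {U : Matrix m n α} {V : Matrix n m α}
    (hA : IsUnit A.det) (hAVU : IsUnit (A + V * U).det) :
    (1 + U * A⁻¹ * V)⁻¹ * U = U * (A + V * U)⁻¹ * A := by
  have hG : IsUnit (1 + U * A⁻¹ * V).det := by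
    rw [Matrix.mul_assoc, det_one_add_mul_comm, ← Matrix.nonsing_inv_mul A hA,
      Matrix.mul_assoc, ← Matrix.mul_add, det_mul]
    exact (isUnit_nonsing_inv_det A hA).mul hAVU
  set G := 1 + U * A⁻¹ * V
  have hGU : G * U = U * A⁻¹ * (A + V * U) := by
    rw [Matrix.add_mul, Matrix.mul_add, Matrix.mul_assoc U A⁻¹ A, Matrix.nonsing_inv_mul A hA]
    simp only [Matrix.one_mul, Matrix.mul_one, Matrix.mul_assoc]
  have hGX : G * (U * (A + V * U)⁻¹ * A) = U := by
    rw [← Matrix.mul_assoc, ← Matrix.mul_assoc, hGU, Matrix.mul_nonsing_inv_cancel_right _ _ hAVU,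
      Matrix.nonsing_inv_mul_cancel_right _ _ hA]
  rw [← Matrix.nonsing_inv_mul_cancel_left G (U * (A + V * U)⁻¹ * A) hG, hGX]

lemma transpose_one_sub_mul_inv_mul_one_sub [DecidableEq n] {α : Type*} [CommRing α]
    {A Q : Matrix n n α} {C : Matrix m n α} (hQ : IsUnit Q.det) (hQT : Qᵀ = Q) (hQA : Q⁻¹ = A + Cᵀ * C) :
    (1 - Q * Cᵀ * C)ᵀ * Q⁻¹ * (1 - Q * Cᵀ * C) = A - Cᵀ * C * Q * A := by
  have hM : Q⁻¹ * (1 - Q * Cᵀ * C) = A := by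
    rw [Matrix.mul_sub, Matrix.mul_one, Matrix.mul_assoc Q,
      Matrix.nonsing_inv_mul_cancel_left _ _ hQ, hQA, add_sub_cancel_right]
  rw [Matrix.mul_assoc, hM, transpose_sub, transpose_one, transpose_mul, transpose_mul,
    transpose_transpose, hQT, Matrix.sub_mul, Matrix.one_mul]
  simp only [Matrix.mul_assoc]

lemma mul_mul_transpose_le_mul_mul_transpose {A B : Matrix n n ℝ} (h : A ≤ B)
    (C : Matrix m n ℝ) : C * A * Cᵀ ≤ C * B * Cᵀ := by
  rw [le_iff] at h ⊢
  simpa only [conjTranspose_eq_transpose_of_trivial, Matrix.mul_sub, Matrix.sub_mul]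
    using h.mul_mul_conjTranspose_same C

lemma IsHermitian.le_iSup_eigenvalues_smul_one [DecidableEq n] {A : Matrix n n ℝ}
    (hA : A.IsHermitian) : A ≤ (⨆ i, hA.eigenvalues i) • (1 : Matrix n n ℝ) := by
  rw [← Algebra.algebraMap_eq_smul_one]
  refine le_algebraMap_of_spectrum_le (fun x hx => ?_) hA
  obtain ⟨i, rfl⟩ := hA.spectrum_real_eq_range_eigenvalues ▸ hx
  exact le_ciSup (Set.finite_range _).bddAbove i

lemma one_add_mul_mul_transpose_le [DecidableEq m] [DecidableEq n] {B : Matrix n n ℝ}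
    {C : Matrix m n ℝ} {b c : ℝ} (hb : 0 ≤ b) (hB : B ≤ b • 1) (hC : C * Cᵀ ≤ c • 1) :
    1 + C * B * Cᵀ ≤ (1 + c * b) • (1 : Matrix m m ℝ) := by
  have hCBC := calc C * B * Cᵀ ≤ C * (b • 1) * Cᵀ := mul_mul_transpose_le_mul_mul_transpose hB C
    _ = b • (C * Cᵀ) := by rw [Matrix.mul_smul, Matrix.mul_one, Matrix.smul_mul]
    _ ≤ b • (c • 1) := smul_le_smul_of_nonneg_left hC hb
  rw [add_smul, one_smul, mul_comm, ← smul_smul]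
  exact add_le_add le_rfl hCBC

lemma PosDef.inv_smul_one_le_inv [DecidableEq n] {G : Matrix n n ℝ} (hG : G.PosDef) {c : ℝ}
    (hc : 0 < c) (hGc : G ≤ c • 1) : c⁻¹ • (1 : Matrix n n ℝ) ≤ G⁻¹ := by
  -- Conjugating `G ≤ c` by `(√G)⁻¹ = √(G⁻¹)` gives `1 ≤ c G⁻¹`.
  set R := CFC.sqrt G with hR_def
  have hRR : R * R = G := CFC.sqrt_mul_sqrt_self G hG.posSemidef.nonneg
  have hR : IsUnit R.det :=
    isUnit_of_mul_isUnit_left (by rw [← det_mul, hRR]; exact hG.isUnit.map detMonoidHom)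
  have hRinv : IsSelfAdjoint R⁻¹ := by
    rw [hR_def, hG.posSemidef.inv_sqrt]; exact IsSelfAdjoint.of_nonneg (CFC.sqrt_nonneg _)
  have hconj := hRinv.conjugate_le_conjugate hGc
  rw [← hRR] at hconj ⊢
  rw [Matrix.mul_assoc, Matrix.mul_assoc, Matrix.mul_nonsing_inv _ hR, Matrix.mul_one,
    Matrix.nonsing_inv_mul _ hR, Matrix.mul_smul, Matrix.mul_one, Matrix.smul_mul,
    ← Matrix.mul_inv_rev] at hconj
  simpa [smul_smul, inv_mul_cancel₀ hc.ne'] using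
    smul_le_smul_of_nonneg_left hconj (inv_nonneg.2 hc.le)

end Matrix

theorem deltaV_identity_and_bound_general (n p : ℕ)
    (P Pn F : Matrix (Fin n) (Fin n) ℝ) (φ : Matrix (Fin p) (Fin n) ℝ)
    (hPn : Pn.PosDef) (hPF : (P⁻¹ - F).PosDef)
    (hupd : Pn⁻¹ = P⁻¹ - F + φᵀ * φ)
    (h1 : (φ * φᵀ).IsHermitian) (h2 : ((P⁻¹ - F)⁻¹).IsHermitian) :
    (-(1 - Pn * φᵀ * φ)ᵀ * Pn⁻¹ * (1 - Pn * φᵀ * φ) + P⁻¹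
        = F + φᵀ * (1 + φ * (P⁻¹ - F)⁻¹ * φᵀ)⁻¹ * φ) ∧
    ((-(1 - Pn * φᵀ * φ)ᵀ * Pn⁻¹ * (1 - Pn * φᵀ * φ) + P⁻¹
        - (F + (1 + (⨆ i, h1.eigenvalues i) * (⨆ i, h2.eigenvalues i))⁻¹
            • (φᵀ * φ))).PosSemidef) := by
  set A := P⁻¹ - F with hA
  have hPn_det : IsUnit Pn.det := hPn.isUnit.map detMonoidHom
  have hGφ : (1 + φ * A⁻¹ * φᵀ)⁻¹ * φ = φ * Pn * A := by
    have hA_det : IsUnit A.det := hPF.isUnit.map detMonoidHom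
    have hPnA : IsUnit (A + φᵀ * φ).det := hupd ▸ isUnit_nonsing_inv_det Pn hPn_det
    rw [inv_one_add_mul_inv_mul_mul hA_det hPnA, ← hupd, nonsing_inv_nonsing_inv Pn hPn_det]
  have hΔV : -(1 - Pn * φᵀ * φ)ᵀ * Pn⁻¹ * (1 - Pn * φᵀ * φ) + P⁻¹
      = F + φᵀ * (1 + φ * A⁻¹ * φᵀ)⁻¹ * φ := by
    rw [neg_mul, neg_mul, transpose_one_sub_mul_inv_mul_one_sub hPn_det hPn.isHermitian hupd,
      Matrix.mul_assoc φᵀ (1 + φ * A⁻¹ * φᵀ)⁻¹, hGφ, hA]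
    simp only [Matrix.mul_assoc]
    abel
  refine ⟨hΔV, ?_⟩
  rw [hΔV, add_sub_add_left_eq_sub, ← le_iff]
  have hl1 : 0 ≤ ⨆ i, h1.eigenvalues i :=
    Real.iSup_nonneg (posSemidef_self_mul_conjTranspose φ).eigenvalues_nonneg
  have hl2 : 0 ≤ ⨆ i, h2.eigenvalues i := Real.iSup_nonneg hPF.inv.posSemidef.eigenvalues_nonneg
  have hG := one_add_mul_mul_transpose_le hl2 h2.le_iSup_eigenvalues_smul_one
    h1.le_iSup_eigenvalues_smul_one
  have hG_pd : (1 + φ * A⁻¹ * φᵀ).PosDef :=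
    PosDef.one.add_posSemidef (hPF.inv.posSemidef.mul_mul_conjTranspose_same φ)
  have := mul_mul_transpose_le_mul_mul_transpose
    (hG_pd.inv_smul_one_le_inv (by positivity) hG) φᵀ
  rwa [transpose_transpose, Matrix.mul_smul, Matrix.mul_one, Matrix.smul_mul] at this

/-- identity and lower bound for `ΔV_k = −M_kᵀP_{k+1}⁻¹M_k + P_k⁻¹` in GF-RLS,
with `M_k = I − P_{k+1}φ̄ᵀφ̄` and `G_k = I + φ̄(P_k⁻¹ − F_k)⁻¹φ̄ᵀ`. -/
theorem deltaV_identity_and_bound (n p : ℕ)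
    (P Pn F : Matrix (Fin n) (Fin n) ℝ) (φ : Matrix (Fin p) (Fin n) ℝ)
    (hP : P.PosDef) (hPn : Pn.PosDef) (hFsymm : F.IsSymm) (hPF : (P⁻¹ - F).PosDef)
    (hupd : Pn⁻¹ = P⁻¹ - F + φᵀ * φ)
    (h1 : (φ * φᵀ).IsHermitian) (h2 : ((P⁻¹ - F)⁻¹).IsHermitian) :
    (-(1 - Pn * φᵀ * φ)ᵀ * Pn⁻¹ * (1 - Pn * φᵀ * φ) + P⁻¹
        = F + φᵀ * (1 + φ * (P⁻¹ - F)⁻¹ * φᵀ)⁻¹ * φ) ∧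
    ((-(1 - Pn * φᵀ * φ)ᵀ * Pn⁻¹ * (1 - Pn * φᵀ * φ) + P⁻¹
        - (F + (1 + (⨆ i, h1.eigenvalues i) * (⨆ i, h2.eigenvalues i))⁻¹
            • (φᵀ * φ))).PosSemidef) :=
  deltaV_identity_and_bound_general n p P Pn F φ hPn hPF hupd h1 h2
end

section
/- Suppose y_k = φ_kθ for all k ≥ 0, F_k ⪰ 0 for all k ≥ 0, and there exists b ∈ (0,∞) with (P_k⁻¹ − F_k)⁻¹ ⪯ bI_n for all k ≥ 0. Then the equilibrium θ̃_k ≡ 0 of the GF-RLS error dynamics θ̃_{k+1} = (I_n − P_{k+1}φ_kᵀΓ_k⁻¹φ_k)θ̃_k is Lyapunov stable. -/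
/-!
The Lyapunov function `V_k(x) = xᵀ P_k⁻¹ x` does not increase along the error dynamics. With
`Q = P_k⁻¹ - F_k`, the update law gives `P_{k+1}⁻¹ θ̃_{k+1} = Q θ̃_k`, so
`V_{k+1}(θ̃_{k+1}) = θ̃_{k+1}ᵀ Q θ̃_k`, and expanding `(θ̃_k - θ̃_{k+1})ᵀ Q (θ̃_k - θ̃_{k+1}) ≥ 0`
bounds this by `θ̃_kᵀ Q θ̃_k ≤ V_k(θ̃_k)`. Conversely `Q⁻¹ ⪯ b I` yields `‖x‖² ≤ b xᵀ Q x ≤ b V_k(x)`,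
so `‖θ̃_k‖² ≤ b V_{k₀}(θ̃_{k₀})`, which is small once `θ̃_{k₀}` is, by continuity of `V_{k₀}`.
-/

open Matrix

/-- Euclidean norm of a vector in `ℝⁿ`. -/
noncomputable def vecEnorm {n : ℕ} (x : Fin n → ℝ) : ℝ := Real.sqrt (x ⬝ᵥ x)

namespace Matrix

variable {ι κ : Type*} [Fintype ι]

lemma PosSemidef.dotProduct_mulVec_self_nonneg {M : Matrix ι ι ℝ} (hM : M.PosSemidef)
    (x : ι → ℝ) : 0 ≤ x ⬝ᵥ M *ᵥ x := by
  simpa using hM.dotProduct_mulVec_nonneg x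

lemma dotProduct_sub_mulVec_le {M F : Matrix ι ι ℝ} (hF : F.PosSemidef) (x : ι → ℝ) :
    x ⬝ᵥ (M - F) *ᵥ x ≤ x ⬝ᵥ M *ᵥ x := by
  rw [sub_mulVec, dotProduct_sub]
  linarith [hF.dotProduct_mulVec_self_nonneg x]

lemma IsHermitian.dotProduct_mulVec_comm {M : Matrix ι ι ℝ} (hM : M.IsHermitian)
    (u v : ι → ℝ) : u ⬝ᵥ M *ᵥ v = v ⬝ᵥ M *ᵥ u := by
  rw [dotProduct_mulVec, ← mulVec_transpose, ← conjTranspose_eq_transpose_of_trivial, hM,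
    dotProduct_comm]

lemma IsHermitian.dotProduct_mulVec_sub_sub {M : Matrix ι ι ℝ} (hM : M.IsHermitian)
    (u v : ι → ℝ) :
    (u - v) ⬝ᵥ M *ᵥ (u - v) = u ⬝ᵥ M *ᵥ u - 2 * (v ⬝ᵥ M *ᵥ u) + v ⬝ᵥ M *ᵥ v := by
  have := hM.dotProduct_mulVec_comm u v
  simp only [mulVec_sub, dotProduct_sub, sub_dotProduct]
  linarith

lemma dotProduct_add_mulVec_le_of_add_mulVec_eq {Q A : Matrix ι ι ℝ} (hQ : Q.PosSemidef)
    (hA : A.PosSemidef) {u v : ι → ℝ} (h : (Q + A) *ᵥ v = Q *ᵥ u) :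
    v ⬝ᵥ (Q + A) *ᵥ v ≤ u ⬝ᵥ Q *ᵥ u := by
  have hcross : v ⬝ᵥ Q *ᵥ v + v ⬝ᵥ A *ᵥ v = v ⬝ᵥ Q *ᵥ u := by
    rw [← h, add_mulVec, dotProduct_add]
  rw [h]
  linarith [hQ.isHermitian.dotProduct_mulVec_sub_sub u v,
    hQ.dotProduct_mulVec_self_nonneg (u - v), hA.dotProduct_mulVec_self_nonneg v]

lemma posSemidef_transpose_mul_inv_mul [Fintype κ] [DecidableEq κ] {Γ : Matrix κ κ ℝ}
    (hΓ : Γ.PosDef) (φ : Matrix κ ι ℝ) : (φᵀ * Γ⁻¹ * φ).PosSemidef := by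
  simpa using hΓ.inv.posSemidef.conjTranspose_mul_mul_same φ

variable [DecidableEq ι]

lemma PosDef.dotProduct_self_le_mul_of_inv_le_smul_one {Q : Matrix ι ι ℝ} (hQ : Q.PosDef)
    {b : ℝ} (hb : 0 < b) (h : (b • (1 : Matrix ι ι ℝ) - Q⁻¹).PosSemidef) (x : ι → ℝ) :
    x ⬝ᵥ x ≤ b * (x ⬝ᵥ Q *ᵥ x) := by
  set y := Q⁻¹ *ᵥ x
  have hQy : Q *ᵥ y = x := by
    rw [mulVec_mulVec, mul_nonsing_inv _ ((isUnit_iff_isUnit_det Q).1 hQ.isUnit), one_mulVec]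
  have hyQx : y ⬝ᵥ Q *ᵥ x = x ⬝ᵥ x := by rw [hQ.isHermitian.dotProduct_mulVec_comm, hQy]
  have hyQy : y ⬝ᵥ Q *ᵥ y = x ⬝ᵥ Q⁻¹ *ᵥ x := by rw [hQy, dotProduct_comm]
  have hinv : x ⬝ᵥ Q⁻¹ *ᵥ x ≤ b * (x ⬝ᵥ x) := by
    have := h.dotProduct_mulVec_self_nonneg x
    rwa [sub_mulVec, dotProduct_sub, smul_mulVec, one_mulVec, dotProduct_smul, smul_eq_mul,
      sub_nonneg] at this
  -- completing the square: `0 ≤ (b x - Q⁻¹ x)ᵀ Q (b x - Q⁻¹ x)`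
  have hsq := hQ.posSemidef.dotProduct_mulVec_self_nonneg (b • x - y)
  rw [hQ.isHermitian.dotProduct_mulVec_sub_sub, hyQy] at hsq
  simp only [mulVec_smul, dotProduct_smul, smul_dotProduct, hyQx, smul_eq_mul] at hsq
  have hscaled : 0 ≤ b * (b * (x ⬝ᵥ Q *ᵥ x) - x ⬝ᵥ x) := by nlinarith
  linarith [(mul_nonneg_iff_of_pos_left hb).1 hscaled]

end Matrix

open Filter Topology in
lemma ContinuousAt.exists_pos_forall_vecEnorm_lt {n : ℕ} {f : (Fin n → ℝ) → ℝ}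
    (hf : ContinuousAt f 0) {η : ℝ} (hη : f 0 < η) :
    ∃ δ > 0, ∀ x, vecEnorm x < δ → f x < η := by
  have hnorm (x : Fin n → ℝ) : vecEnorm x = ‖WithLp.toLp 2 x‖ := by
    simp [EuclideanSpace.norm_eq, vecEnorm, dotProduct, sq]
  have hev : ∀ᶠ y in 𝓝 (0 : EuclideanSpace ℝ (Fin n)), f y.ofLp < η :=
    (hf.comp_of_eq (PiLp.continuous_ofLp 2 _).continuousAt rfl).eventually (gt_mem_nhds hη)
  obtain ⟨δ, hδ, hball⟩ := Metric.eventually_nhds_iff.1 hev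
  exact ⟨δ, hδ, fun x hx => hball (by simpa [← hnorm])⟩

lemma gfrls_lyapunov_step {ι κ : Type*} [Fintype ι] [DecidableEq ι] [Fintype κ] [DecidableEq κ]
    {P P' F : Matrix ι ι ℝ} {Γ : Matrix κ κ ℝ} {φ : Matrix κ ι ℝ}
    (hΓ : Γ.PosDef) (hP' : P'.PosDef) (hF : F.PosSemidef) (hPF : (P⁻¹ - F).PosSemidef)
    (hupd : P'⁻¹ = P⁻¹ - F + φᵀ * Γ⁻¹ * φ) (u : ι → ℝ) :
    ((1 - P' * φᵀ * Γ⁻¹ * φ) *ᵥ u) ⬝ᵥ P'⁻¹ *ᵥ ((1 - P' * φᵀ * Γ⁻¹ * φ) *ᵥ u) ≤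
      u ⬝ᵥ P⁻¹ *ᵥ u := by
  set v := (1 - P' * φᵀ * Γ⁻¹ * φ) *ᵥ u
  have hcancel : P'⁻¹ * (P' * φᵀ * Γ⁻¹ * φ) = φᵀ * Γ⁻¹ * φ := by
    simp only [← Matrix.mul_assoc, nonsing_inv_mul _ ((isUnit_iff_isUnit_det P').1 hP'.isUnit),
      Matrix.one_mul]
  have hgain : P'⁻¹ *ᵥ v = (P⁻¹ - F) *ᵥ u := by
    rw [mulVec_mulVec, mul_sub, mul_one, hcancel, hupd, add_sub_cancel_right]
  calc v ⬝ᵥ P'⁻¹ *ᵥ v = v ⬝ᵥ (P⁻¹ - F + φᵀ * Γ⁻¹ * φ) *ᵥ v := by rw [hupd]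
    _ ≤ u ⬝ᵥ (P⁻¹ - F) *ᵥ u := dotProduct_add_mulVec_le_of_add_mulVec_eq hPF
        (posSemidef_transpose_mul_inv_mul hΓ φ) (by rw [← hupd, hgain])
    _ ≤ u ⬝ᵥ P⁻¹ *ᵥ u := dotProduct_sub_mulVec_le hF u

theorem gfrls_error_lyapunov_stable_general (n p : ℕ)
    (Γ : ℕ → Matrix (Fin p) (Fin p) ℝ) (hΓ : ∀ k, (Γ k).PosDef)
    (φ : ℕ → Matrix (Fin p) (Fin n) ℝ)
    (F : ℕ → Matrix (Fin n) (Fin n) ℝ)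
    (P : ℕ → Matrix (Fin n) (Fin n) ℝ) (hP : ∀ k, (P k).PosDef)
    (hPF : ∀ k, ((P k)⁻¹ - F k).PosDef)
    (hupd : ∀ k, (P (k + 1))⁻¹ = (P k)⁻¹ - F k + (φ k)ᵀ * (Γ k)⁻¹ * φ k)
    (hFpsd : ∀ k, (F k).PosSemidef)
    (b : ℝ) (hb : 0 < b)
    (hbd : ∀ k, (b • (1 : Matrix (Fin n) (Fin n) ℝ) - ((P k)⁻¹ - F k)⁻¹).PosSemidef) :
    ∀ ε > (0 : ℝ), ∀ k0 : ℕ, ∃ δ > (0 : ℝ), ∀ θt : ℕ → Fin n → ℝ,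
      (∀ k ≥ k0, θt (k + 1) = (1 - P (k + 1) * (φ k)ᵀ * (Γ k)⁻¹ * φ k).mulVec (θt k)) →
      vecEnorm (θt k0) < δ → ∀ k ≥ k0, vecEnorm (θt k) < ε := by
  intro ε hε k0
  obtain ⟨δ, hδ, hsmall⟩ := ContinuousAt.exists_pos_forall_vecEnorm_lt
    (f := fun x => x ⬝ᵥ (P k0)⁻¹ *ᵥ x) (by fun_prop) (η := ε ^ 2 / b)
    (by simp only [zero_dotProduct]; positivity)
  refine ⟨δ, hδ, fun θt hdyn hinit k hk => ?_⟩
  have hV : AntitoneOn (fun k => θt k ⬝ᵥ (P k)⁻¹ *ᵥ θt k) (Set.Ici k0) :=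
    antitoneOn_nat_Ici_of_succ_le fun m hm => by
      rw [hdyn m hm]
      exact gfrls_lyapunov_step (hΓ m) (hP (m + 1)) (hFpsd m) (hPF m).posSemidef (hupd m) _
  have hlow : θt k ⬝ᵥ θt k ≤ b * (θt k ⬝ᵥ (P k)⁻¹ *ᵥ θt k) :=
    ((hPF k).dotProduct_self_le_mul_of_inv_le_smul_one hb (hbd k) _).trans
      (mul_le_mul_of_nonneg_left (dotProduct_sub_mulVec_le (hFpsd k) _) hb.le)
  have hdecay := hV (Set.mem_Ici.2 le_rfl) (Set.mem_Ici.2 hk) hk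
  refine (Real.sqrt_lt' hε).2 ?_
  calc θt k ⬝ᵥ θt k ≤ b * (θt k0 ⬝ᵥ (P k0)⁻¹ *ᵥ θt k0) :=
        hlow.trans (mul_le_mul_of_nonneg_left hdecay hb.le)
    _ < b * (ε ^ 2 / b) := mul_lt_mul_of_pos_left (hsmall _ hinit) hb
    _ = ε ^ 2 := mul_div_cancel₀ _ hb.ne'

/-- under `F_k ⪰ 0` and `(P_k⁻¹ − F_k)⁻¹ ⪯ b I`, the zero equilibrium of the
GF-RLS error dynamics `θ̃_{k+1} = (I − P_{k+1}φ_kᵀΓ_k⁻¹φ_k)θ̃_k` is Lyapunov stable. -/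
theorem gfrls_error_lyapunov_stable (n p : ℕ)
    (Γ : ℕ → Matrix (Fin p) (Fin p) ℝ) (hΓ : ∀ k, (Γ k).PosDef)
    (φ : ℕ → Matrix (Fin p) (Fin n) ℝ)
    (F : ℕ → Matrix (Fin n) (Fin n) ℝ) (hFsymm : ∀ k, (F k).IsSymm)
    (P : ℕ → Matrix (Fin n) (Fin n) ℝ) (hP : ∀ k, (P k).PosDef)
    (hPF : ∀ k, ((P k)⁻¹ - F k).PosDef)
    (hupd : ∀ k, (P (k + 1))⁻¹ = (P k)⁻¹ - F k + (φ k)ᵀ * (Γ k)⁻¹ * φ k)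
    (hFpsd : ∀ k, (F k).PosSemidef)
    (b : ℝ) (hb : 0 < b)
    (hbd : ∀ k, (b • (1 : Matrix (Fin n) (Fin n) ℝ) - ((P k)⁻¹ - F k)⁻¹).PosSemidef) :
    ∀ ε > (0 : ℝ), ∀ k0 : ℕ, ∃ δ > (0 : ℝ), ∀ θt : ℕ → Fin n → ℝ,
      (∀ k ≥ k0, θt (k + 1) = (1 - P (k + 1) * (φ k)ᵀ * (Γ k)⁻¹ * φ k).mulVec (θt k)) →
      vecEnorm (θt k0) < δ → ∀ k ≥ k0, vecEnorm (θt k) < ε :=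
  gfrls_error_lyapunov_stable_general n p Γ hΓ φ F P hP hPF hupd hFpsd b hb hbd
end
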